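/- arXiv:2511.23446 — 2 statements merged into one kernel-verified Lean document; each statement's English description precedes it below -/
import Mathlib

section
/- Let X be a real n×2n matrix with X·R·Xᵀ = 0 and Δ_I(X) ≥ 0 for every n-element subset I of {1,…,2n}, let a > 0, and let i ∈ {1,…,2n}. Set Y = X·x_i(a)·y_{i+n}(a), with the index i+n taken modulo 2n with representative in {1,…,2n}. Then Y·R·Yᵀ = 0 and Δ_I(Y) ≥ 0 for every n-element subset I of {1,…,2n}. -/
open Matrix

/-- `Δ_I(X)`: the determinant of the `n × n` submatrix of the `n × 2n` matrix `X`
formed by the columns indexed by `I` (taken in increasing order); `0` if `I.card ≠ n`. -/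
noncomputable def Delta {n : ℕ} (X : Matrix (Fin n) (Fin (2*n)) ℝ)
    (I : Finset (Fin (2*n))) : ℝ :=
  if h : I.card = n then
    (X.submatrix id (fun j : Fin n => ((I.orderIsoOfFin h j : Fin (2*n))))).det
  else 0

/-- The Gram matrix of the form `R(x,y) = Σ_{i=1}^n (−1)^{i−1}(x_i y_{n+i} − x_{n+i} y_i)`,
with `0`-based indices. -/
def Rmat (n : ℕ) : Matrix (Fin (2*n)) (Fin (2*n)) ℝ := fun i j =>
  if (j : ℕ) = (i : ℕ) + n then (-1 : ℝ) ^ (i : ℕ)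
  else if (i : ℕ) = (j : ℕ) + n then -(-1 : ℝ) ^ (j : ℕ)
  else 0

/-- Rotation of indices by `n` modulo `2n`. -/
def rotIdx (n : ℕ) (i : Fin (2*n)) : Fin (2*n) :=
  ⟨((i : ℕ) + n) % (2*n), Nat.mod_lt _ (Nat.lt_of_le_of_lt (Nat.zero_le _) i.isLt)⟩

/-- `x_i(a)` (0-based index `i`): the identity matrix with an extra entry `a` in
position `(i, i+1)` for `i < 2n−1`, and with extra entry `(−1)^{n−1}a` in position
`(2n−1, 0)` for `i = 2n−1`. -/
def xMat (n : ℕ) (i : Fin (2*n)) (a : ℝ) : Matrix (Fin (2*n)) (Fin (2*n)) ℝ :=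
  fun r c =>
    (if r = c then 1 else 0) +
    (if (i : ℕ) + 1 < 2*n then
      (if (r : ℕ) = (i : ℕ) ∧ (c : ℕ) = (i : ℕ) + 1 then a else 0)
    else
      (if (r : ℕ) = (i : ℕ) ∧ (c : ℕ) = 0 then (-1 : ℝ) ^ (n - 1) * a else 0))

/-- `y_i(a)` (0-based index `i`): the identity matrix with an extra entry `a` in
position `(i+1, i)` for `i < 2n−1`, and with extra entry `(−1)^{n−1}a` in position
`(0, 2n−1)` for `i = 2n−1`. -/
def yMat (n : ℕ) (i : Fin (2*n)) (a : ℝ) : Matrix (Fin (2*n)) (Fin (2*n)) ℝ :=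
  fun r c =>
    (if r = c then 1 else 0) +
    (if (i : ℕ) + 1 < 2*n then
      (if (r : ℕ) = (i : ℕ) + 1 ∧ (c : ℕ) = (i : ℕ) then a else 0)
    else
      (if (r : ℕ) = 0 ∧ (c : ℕ) = (i : ℕ) then (-1 : ℝ) ^ (n - 1) * a else 0))

/-!
Right multiplication by `1 + c E_{s,t}` adds `c` times column `s` to column `t`. Expanding along
that column, a maximal minor `Δ_I` with `t ∈ I`, `s ∉ I` becomes `Δ_I + c (-1)^k Δ_J` with
`J = I - t + s`, where `k` is the sum of the positions of `t` in `I` and of `s` in `J`; for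
`s ∈ I` or `t ∉ I` it is unchanged. For the cyclically adjacent columns of `x_i(a)` and `y_i(a)`,
`k` is even, except across the wrap-around `2n ↔ 1`, where `k = n - 1` and the factor
`(-1)^{n-1}` in the corner entry restores the sign. So both factors preserve nonnegativity of
all maximal minors.

For the isotropy, `R` only pairs indices `p` and `p + n (mod 2n)`, so `x_i(a)` and
`y_{i+n}(a) = x_{i+n}(a)ᵀ` commute and `x_i(a) R x_{i+n}(a) = R` reduces to a single entry.
As `R` is antisymmetric, `M = x_i(a) y_{i+n}(a)` then satisfies `M R Mᵀ = R`.
-/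

open Finset

namespace Matrix

theorem submatrix_updateCol_of_injective {R ι α κ : Type*} [DecidableEq ι] [DecidableEq α]
    (Z : Matrix κ α R) {f : ι → α} (hf : Function.Injective f) (p : ι) (v : κ → R) :
    (Z.updateCol (f p) v).submatrix id f = (Z.submatrix id f).updateCol p v := by
  ext r k
  simp only [submatrix_apply, updateCol_apply, hf.eq_iff, id]

theorem det_updateCol_eq_neg_one_pow_mul {R α : Type*} [CommRing R] {m : ℕ}
    (Z : Matrix (Fin (m + 1)) α R) {f g : Fin (m + 1) → α} {p q : Fin (m + 1)}
    (h : f ∘ p.succAbove = g ∘ q.succAbove) (v : Fin (m + 1) → R) :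
    ((Z.submatrix id f).updateCol p v).det =
      (-1) ^ ((p : ℕ) + q) * ((Z.submatrix id g).updateCol q v).det := by
  rw [det_succ_column _ p, det_succ_column _ q, Finset.mul_sum]
  refine Finset.sum_congr rfl fun r _ => ?_
  simp only [submatrix_updateCol_succAbove, submatrix_submatrix, updateCol_self, h]
  rw [← mul_assoc, ← mul_assoc, ← pow_add,
    show (p : ℕ) + q + (r + q) = r + p + 2 * q by ring, pow_add _ _ (2 * _), pow_mul,
    neg_one_sq, one_pow, mul_one]

variable {R ι α : Type*} [CommRing R] [Fintype ι]

theorem mul_mul_mul_transpose_eq_of_commute {x y M : Matrix ι ι R} (hxy : Commute x y)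
    (hM : Mᵀ = -M) (h : x * M * yᵀ = M) : x * y * M * (x * y)ᵀ = M := by
  have h' : y * M * xᵀ = M := by
    have := congrArg transpose h
    rw [transpose_mul, transpose_mul, transpose_transpose, hM, ← Matrix.mul_assoc] at this
    simpa using this
  calc x * y * M * (x * y)ᵀ = y * (x * M * yᵀ) * xᵀ := by
        rw [transpose_mul, hxy.eq]; simp only [Matrix.mul_assoc]
    _ = M := by rw [h, h']

variable [DecidableEq ι]

theorem mul_one_add_single (Z : Matrix α ι R) (s t : ι) (c : R) :
    Z * (1 + single s t c) = Z.updateCol t (Zᵀ t + c • Zᵀ s) := by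
  ext r q
  rw [Matrix.mul_add, Matrix.mul_one, add_apply, updateCol_apply]
  split_ifs with hq
  · rw [hq, mul_single_apply_same]
    simp [mul_comm]
  · rw [mul_single_apply_of_ne _ _ _ _ _ hq, add_zero]

theorem one_add_single_mul_mul_one_add_single (M : Matrix ι ι R) {i k j l : ι} {c d : R}
    (hkj : M k j = 0) (hrow : ∀ q ≠ l, M k q = 0) (hcol : ∀ p ≠ i, M p j = 0)
    (hcorner : c * M k l + M i j * d = 0) :
    (1 + single i k c) * M * (1 + single j l d) = M := by
  have hcross : single i k c * M + M * single j l d = 0 := by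
    ext p q
    rw [add_apply, zero_apply]
    by_cases hp : p = i <;> by_cases hq : q = l
    · rw [hp, hq, single_mul_apply_same, mul_single_apply_same, hcorner]
    · rw [hp, single_mul_apply_same, mul_single_apply_of_ne _ _ _ _ _ hq, hrow q hq, mul_zero,
        add_zero]
    · rw [hq, single_mul_apply_of_ne _ _ _ _ _ hp, mul_single_apply_same, hcol p hp, zero_mul,
        zero_add]
    · rw [single_mul_apply_of_ne _ _ _ _ _ hp, mul_single_apply_of_ne _ _ _ _ _ hq, add_zero]
  have hboth : single i k c * M * single j l d = 0 := by
    rw [single_mul_mul_single, hkj, mul_zero, zero_mul, single_zero]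
  calc (1 + single i k c) * M * (1 + single j l d)
      = M + (single i k c * M + M * single j l d) + single i k c * M * single j l d := by
        noncomm_ring
    _ = M := by rw [hcross, hboth, add_zero, add_zero]

theorem commute_one_add_single {i k l j : ι} (hkl : k ≠ l) (hji : j ≠ i) (c d : R) :
    Commute (1 + single i k c) (1 + single l j d) := by
  have h : Commute (single i k c) (single l j d) := by
    rw [Commute, SemiconjBy, single_mul_single_of_ne c i k l hkl d,
      single_mul_single_of_ne d l j i hji c]
  exact (Commute.one_left _).add_left ((Commute.one_right _).add_right h)

theorem det_submatrix_updateCol_add_smul_self (Z : Matrix ι α R) (f : ι → α) (p : ι) (c : R)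
    (w : ι → R) :
    ((Z.submatrix id f).updateCol p (Zᵀ (f p) + c • w)).det =
      (Z.submatrix id f).det + c * ((Z.submatrix id f).updateCol p w).det := by
  rw [det_updateCol_add, det_updateCol_smul]
  exact congrArg (· + _) (congrArg det (updateCol_eq_self _ p))

end Matrix

namespace Finset

variable {α : Type*} [LinearOrder α]

theorem orderEmbOfFin_comp_succAbove {I : Finset α} {m : ℕ} (hI : I.card = m + 1)
    (p : Fin (m + 1)) (h : (I.erase (I.orderEmbOfFin hI p)).card = m) :
    I.orderEmbOfFin hI ∘ p.succAbove = (I.erase (I.orderEmbOfFin hI p)).orderEmbOfFin h := by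
  refine orderEmbOfFin_unique h (fun k => mem_erase.2 ⟨?_, orderEmbOfFin_mem _ _ _⟩)
    ((I.orderEmbOfFin hI).strictMono.comp (Fin.strictMono_succAbove p))
  exact (I.orderEmbOfFin hI).injective.ne (Fin.succAbove_ne p k)

theorem card_filter_lt_orderEmbOfFin {I : Finset α} {k : ℕ} (hI : I.card = k) (j : Fin k) :
    #{u ∈ I | u < I.orderEmbOfFin hI j} = j := by
  have : {u ∈ I | u < I.orderEmbOfFin hI j} = (Iio j).map (I.orderEmbOfFin hI).toEmbedding := by
    ext u
    simp only [mem_filter, mem_map, mem_Iio, RelEmbedding.coe_toEmbedding]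
    constructor
    · rintro ⟨hu, hlt⟩
      obtain ⟨l, rfl⟩ : u ∈ Set.range (I.orderEmbOfFin hI) := by
        rwa [range_orderEmbOfFin]
      exact ⟨l, (I.orderEmbOfFin hI).lt_iff_lt.1 hlt, rfl⟩
    · rintro ⟨l, hl, rfl⟩
      exact ⟨orderEmbOfFin_mem _ _ _, (I.orderEmbOfFin hI).lt_iff_lt.2 hl⟩
  rw [this, card_map, Fin.card_Iio]

theorem card_insert_erase {I : Finset α} {s t : α} (ht : t ∈ I) (hs : s ∉ I) :
    #(insert s (I.erase t)) = #I := by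
  rw [card_insert_of_notMem (fun h => hs (mem_of_mem_erase h)), card_erase_of_mem ht]
  exact Nat.sub_add_cancel (card_pos.2 ⟨t, ht⟩)

theorem card_filter_lt_insert_erase {I : Finset α} {s t : α}
    (hadj : ∀ u ∈ I, u ≠ t → (u < s ↔ u < t)) :
    #{u ∈ insert s (I.erase t) | u < s} = #{u ∈ I | u < t} := by
  rw [filter_insert, if_neg (lt_irrefl s),
    filter_congr fun u hu => hadj u (mem_of_mem_erase hu) (ne_of_mem_erase hu), filter_erase,
    erase_eq_of_notMem (by simp)]

theorem card_filter_lt_of_forall_le {I : Finset α} {t : α} (ht : t ∈ I)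
    (htop : ∀ u ∈ I, u ≤ t) :
    #{u ∈ I | u < t} = #I - 1 := by
  rw [← card_erase_of_mem ht]
  congr 1
  ext u
  simp only [mem_filter, mem_erase]
  exact ⟨fun h => ⟨h.2.ne, h.1⟩, fun h => ⟨h.2, lt_of_le_of_ne (htop u h.2) h.1⟩⟩

theorem card_filter_lt_of_forall_ge {I : Finset α} {t : α} (hbot : ∀ u ∈ I, t ≤ u) :
    #{u ∈ I | u < t} = 0 := by
  rw [card_eq_zero, filter_eq_empty_iff]
  exact fun u hu => not_lt.2 (hbot u hu)

end Finset

namespace Fin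

variable {m : ℕ} {I : Finset (Fin m)} {s t : Fin m}

theorem even_card_filter_lt_add_of_adjacent (hs : s ∉ I)
    (hadj : (s : ℕ) + 1 = t ∨ (t : ℕ) + 1 = s) :
    Even (#{u ∈ I | u < t} + #{u ∈ insert s (I.erase t) | u < s}) := by
  rw [card_filter_lt_insert_erase (I := I) fun u hu hut => ?_]
  · exact Even.add_self _
  have hus : (u : ℕ) ≠ s := fun h => hs (Fin.ext h ▸ hu)
  have hut : (u : ℕ) ≠ t := fun h => hut (Fin.ext h)
  simp only [Fin.lt_def]
  omega

theorem card_filter_lt_add_of_wrap (ht : t ∈ I) (hs : s ∉ I)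
    (hwrap : ((s : ℕ) + 1 = m ∧ (t : ℕ) = 0) ∨ ((s : ℕ) = 0 ∧ (t : ℕ) + 1 = m)) :
    #{u ∈ I | u < t} + #{u ∈ insert s (I.erase t) | u < s} = #I - 1 := by
  rcases hwrap with ⟨hs', ht'⟩ | ⟨hs', ht'⟩
  · rw [card_filter_lt_of_forall_ge fun u _ => Fin.le_def.2 (by omega),
      card_filter_lt_of_forall_le (mem_insert_self s _) fun u _ => Fin.le_def.2 (by omega),
      card_insert_erase ht hs, zero_add]
  · rw [card_filter_lt_of_forall_le ht fun u _ => Fin.le_def.2 (by omega),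
      card_filter_lt_of_forall_ge fun u _ => Fin.le_def.2 (by omega), add_zero]

end Fin

section Minors

variable {n : ℕ} (Z : Matrix (Fin n) (Fin (2 * n)) ℝ) {I : Finset (Fin (2 * n))}

theorem Delta_eq_det (hI : I.card = n) :
    Delta Z I = (Z.submatrix id (I.orderEmbOfFin hI)).det := by
  rw [Delta, dif_pos hI]
  rfl

theorem Delta_mul_one_add_single_of_notMem (hI : I.card = n) {t : Fin (2 * n)} (ht : t ∉ I)
    (s : Fin (2 * n)) (c : ℝ) : Delta (Z * (1 + single s t c)) I = Delta Z I := by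
  rw [mul_one_add_single, Delta_eq_det _ hI, Delta_eq_det _ hI]
  congr 1
  ext r k
  exact updateCol_ne fun h => ht (h ▸ orderEmbOfFin_mem I hI k)

theorem Delta_mul_one_add_single_of_mem_of_mem (hI : I.card = n) {s t : Fin (2 * n)}
    (ht : t ∈ I) (hs : s ∈ I) (hst : s ≠ t) (c : ℝ) :
    Delta (Z * (1 + single s t c)) I = Delta Z I := by
  obtain ⟨p, rfl⟩ : t ∈ Set.range (I.orderEmbOfFin hI) := by rwa [range_orderEmbOfFin]
  obtain ⟨q, rfl⟩ : s ∈ Set.range (I.orderEmbOfFin hI) := by rwa [range_orderEmbOfFin]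
  have hpq : p ≠ q := fun h => hst (by rw [h])
  have hdup : ((Z.submatrix id (I.orderEmbOfFin hI)).updateCol p
      (Zᵀ (I.orderEmbOfFin hI q))).det = 0 :=
    det_zero_of_column_eq hpq fun r => by simp [hpq.symm]
  rw [mul_one_add_single, Delta_eq_det _ hI, Delta_eq_det _ hI,
    submatrix_updateCol_of_injective _ (I.orderEmbOfFin hI).injective,
    det_submatrix_updateCol_add_smul_self, hdup, mul_zero, add_zero]

theorem Delta_mul_one_add_single_of_mem_of_notMem (hI : I.card = n) {s t : Fin (2 * n)}
    (ht : t ∈ I) (hs : s ∉ I) (c : ℝ) :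
    Delta (Z * (1 + single s t c)) I = Delta Z I + c *
      (-1) ^ (#{u ∈ I | u < t} + #{u ∈ insert s (I.erase t) | u < s}) *
        Delta Z (insert s (I.erase t)) := by
  obtain ⟨m, rfl⟩ : ∃ m, n = m + 1 := Nat.exists_eq_add_one.2 (hI ▸ card_pos.2 ⟨t, ht⟩)
  set J := insert s (I.erase t)
  have hJ : J.card = m + 1 := (card_insert_erase ht hs).trans hI
  obtain ⟨p, rfl⟩ : t ∈ Set.range (I.orderEmbOfFin hI) := by rwa [range_orderEmbOfFin]
  obtain ⟨q, hq⟩ : s ∈ Set.range (J.orderEmbOfFin hJ) := by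
    rw [range_orderEmbOfFin]; exact mem_insert_self s _
  have herase : J.erase (J.orderEmbOfFin hJ q) = I.erase (I.orderEmbOfFin hI p) := by
    rw [hq, erase_insert fun h => hs (mem_of_mem_erase h)]
  have hcomp : I.orderEmbOfFin hI ∘ p.succAbove = J.orderEmbOfFin hJ ∘ q.succAbove := by
    rw [orderEmbOfFin_comp_succAbove hI p (by rw [card_erase_of_mem ht, hI]; rfl),
      orderEmbOfFin_comp_succAbove hJ q (by rw [herase, card_erase_of_mem ht, hI]; rfl)]
    simp_rw [herase]
  rw [mul_one_add_single, Delta_eq_det _ hI, Delta_eq_det _ hI, Delta_eq_det _ hJ,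
    submatrix_updateCol_of_injective _ (I.orderEmbOfFin hI).injective,
    det_submatrix_updateCol_add_smul_self, det_updateCol_eq_neg_one_pow_mul _ hcomp,
    card_filter_lt_orderEmbOfFin, ← hq, card_filter_lt_orderEmbOfFin, mul_assoc]
  exact congrArg (fun A => _ + c * (_ * det A)) (updateCol_eq_self _ q)

end Minors

theorem Delta_mul_one_add_single_nonneg {n : ℕ} {Z : Matrix (Fin n) (Fin (2 * n)) ℝ}
    (hZ : ∀ I : Finset (Fin (2 * n)), I.card = n → 0 ≤ Delta Z I) {s t : Fin (2 * n)}
    (hst : s ≠ t) {c : ℝ}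
    (hc : ∀ I : Finset (Fin (2 * n)), I.card = n → t ∈ I → s ∉ I →
      0 ≤ c * (-1) ^ (#{u ∈ I | u < t} + #{u ∈ insert s (I.erase t) | u < s}))
    (I : Finset (Fin (2 * n))) (hI : I.card = n) :
    0 ≤ Delta (Z * (1 + single s t c)) I := by
  by_cases ht : t ∈ I
  · by_cases hs : s ∈ I
    · rw [Delta_mul_one_add_single_of_mem_of_mem _ hI ht hs hst]
      exact hZ I hI
    · rw [Delta_mul_one_add_single_of_mem_of_notMem _ hI ht hs]
      exact add_nonneg (hZ I hI)
        (mul_nonneg (hc I hI ht hs) (hZ _ ((card_insert_erase ht hs).trans hI)))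
  · rw [Delta_mul_one_add_single_of_notMem _ hI ht]
    exact hZ I hI

def cycSucc (n : ℕ) (i : Fin (2 * n)) : Fin (2 * n) :=
  ⟨if (i : ℕ) + 1 < 2 * n then (i : ℕ) + 1 else 0, by split_ifs <;> omega⟩

def bridgeCoeff (n : ℕ) (i : Fin (2 * n)) (a : ℝ) : ℝ :=
  if (i : ℕ) + 1 < 2 * n then a else (-1) ^ (n - 1) * a

theorem xMat_eq (n : ℕ) (i : Fin (2 * n)) (a : ℝ) :
    xMat n i a = 1 + single i (cycSucc n i) (bridgeCoeff n i a) := by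
  ext r c
  simp only [xMat, Matrix.add_apply, one_apply, single_apply, cycSucc, bridgeCoeff, Fin.ext_iff]
  congr 1
  split_ifs <;> first | rfl | (exfalso; omega)

theorem yMat_eq_transpose (n : ℕ) (i : Fin (2 * n)) (a : ℝ) : yMat n i a = (xMat n i a)ᵀ := by
  ext r c
  simp only [xMat, yMat, transpose_apply, eq_comm (a := r), and_comm]

theorem cycSucc_ne_self {n : ℕ} (i : Fin (2 * n)) : cycSucc n i ≠ i := by
  intro h
  have := congrArg Fin.val h
  simp only [cycSucc] at this
  split_ifs at this <;> omega

theorem bridgeCoeff_mul_neg_one_pow_nonneg {n : ℕ} {i : Fin (2 * n)} {a : ℝ} (ha : 0 ≤ a)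
    {I : Finset (Fin (2 * n))} (hI : I.card = n) {s t : Fin (2 * n)} (ht : t ∈ I) (hs : s ∉ I)
    (hst : (s = i ∧ t = cycSucc n i) ∨ (s = cycSucc n i ∧ t = i)) :
    0 ≤ bridgeCoeff n i a *
      (-1) ^ (#{u ∈ I | u < t} + #{u ∈ insert s (I.erase t) | u < s}) := by
  have hi := i.isLt
  have hsucc : ((cycSucc n i : ℕ) = i + 1 ∧ (i : ℕ) + 1 < 2 * n) ∨
      ((cycSucc n i : ℕ) = 0 ∧ (i : ℕ) + 1 = 2 * n) := by
    simp only [cycSucc]; split_ifs <;> omega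
  have hst' : ((s : ℕ) = i ∧ (t : ℕ) = cycSucc n i) ∨
      ((s : ℕ) = cycSucc n i ∧ (t : ℕ) = i) := by
    rcases hst with ⟨rfl, rfl⟩ | ⟨rfl, rfl⟩ <;> simp
  unfold bridgeCoeff
  split_ifs with hlast
  · rw [(Fin.even_card_filter_lt_add_of_adjacent hs (by omega)).neg_one_pow, mul_one]
    exact ha
  · rw [Fin.card_filter_lt_add_of_wrap ht hs (by omega), hI, mul_right_comm, ← pow_add,
      Even.neg_one_pow ⟨n - 1, rfl⟩, one_mul]
    exact ha

theorem Delta_mul_xMat_nonneg {n : ℕ} {Z : Matrix (Fin n) (Fin (2 * n)) ℝ}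
    (hZ : ∀ I : Finset (Fin (2 * n)), I.card = n → 0 ≤ Delta Z I) {a : ℝ} (ha : 0 ≤ a)
    (i : Fin (2 * n)) (I : Finset (Fin (2 * n))) (hI : I.card = n) :
    0 ≤ Delta (Z * xMat n i a) I := by
  rw [xMat_eq]
  exact Delta_mul_one_add_single_nonneg hZ (cycSucc_ne_self i).symm
    (fun J hJ ht hs => bridgeCoeff_mul_neg_one_pow_nonneg ha hJ ht hs (.inl ⟨rfl, rfl⟩)) I hI

theorem Delta_mul_yMat_nonneg {n : ℕ} {Z : Matrix (Fin n) (Fin (2 * n)) ℝ}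
    (hZ : ∀ I : Finset (Fin (2 * n)), I.card = n → 0 ≤ Delta Z I) {a : ℝ} (ha : 0 ≤ a)
    (i : Fin (2 * n)) (I : Finset (Fin (2 * n))) (hI : I.card = n) :
    0 ≤ Delta (Z * yMat n i a) I := by
  rw [yMat_eq_transpose, xMat_eq, transpose_add, transpose_one, transpose_single]
  exact Delta_mul_one_add_single_nonneg hZ (cycSucc_ne_self i)
    (fun J hJ ht hs => bridgeCoeff_mul_neg_one_pow_nonneg ha hJ ht hs (.inr ⟨rfl, rfl⟩)) I hI

section Lagrangian

variable {n : ℕ}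

theorem val_rotIdx (i : Fin (2 * n)) :
    (rotIdx n i : ℕ) = if (i : ℕ) < n then (i : ℕ) + n else (i : ℕ) - n := by
  have hi := i.isLt
  simp only [rotIdx]
  split_ifs with h
  · exact Nat.mod_eq_of_lt (by omega)
  · rw [Nat.mod_eq_sub_mod (by omega), Nat.mod_eq_of_lt (by omega)]
    omega

theorem val_cycSucc (i : Fin (2 * n)) :
    (cycSucc n i : ℕ) = if (i : ℕ) + 1 < 2 * n then (i : ℕ) + 1 else 0 := rfl

theorem rotIdx_rotIdx (i : Fin (2 * n)) : rotIdx n (rotIdx n i) = i := by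
  ext
  rw [val_rotIdx, val_rotIdx]
  split_ifs <;> omega

theorem rotIdx_ne_self (i : Fin (2 * n)) : rotIdx n i ≠ i := by
  intro h
  have := congrArg Fin.val h
  rw [val_rotIdx] at this
  split_ifs at this <;> omega

theorem rotIdx_cycSucc (i : Fin (2 * n)) : rotIdx n (cycSucc n i) = cycSucc n (rotIdx n i) := by
  have hi := i.isLt
  ext
  rw [val_rotIdx, val_cycSucc, val_cycSucc, val_rotIdx]
  split_ifs <;> omega

theorem Rmat_eq_zero_of_ne_rotIdx {p q : Fin (2 * n)} (h : q ≠ rotIdx n p) : Rmat n p q = 0 := by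
  have h' : (q : ℕ) ≠ rotIdx n p := fun hv => h (Fin.ext hv)
  rw [val_rotIdx] at h'
  have := p.isLt
  simp only [Rmat]
  split_ifs at h' ⊢ <;> first | rfl | (exfalso; omega)

theorem Rmat_apply_rotIdx (p : Fin (2 * n)) :
    Rmat n p (rotIdx n p) =
      if (p : ℕ) < n then (-1) ^ (p : ℕ) else -(-1) ^ ((p : ℕ) - n) := by
  have := p.isLt
  simp only [Rmat, val_rotIdx]
  split_ifs <;> first | rfl | (exfalso; omega)

theorem Rmat_transpose : (Rmat n)ᵀ = -Rmat n := by
  ext p q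
  simp only [transpose_apply, Matrix.neg_apply, Rmat]
  split_ifs <;> first | simp | (exfalso; omega)


theorem bridgeCoeff_mul_Rmat_add (i : Fin (2 * n)) (a : ℝ) :
    bridgeCoeff n i a * Rmat n (cycSucc n i) (cycSucc n (rotIdx n i)) +
      Rmat n i (rotIdx n i) * bridgeCoeff n (rotIdx n i) a = 0 := by
  have hi := i.isLt
  rw [← rotIdx_cycSucc, Rmat_apply_rotIdx, Rmat_apply_rotIdx]
  unfold bridgeCoeff
  rw [val_cycSucc, val_rotIdx]
  split_ifs <;> try (exfalso; omega)
  · rw [pow_succ]; ring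
  · rw [show (i : ℕ) + 1 - n = 0 by omega, show (i : ℕ) = n - 1 by omega, ← mul_assoc,
      ← pow_add, Even.neg_one_pow ⟨_, rfl⟩]
    ring
  · rw [show (i : ℕ) + 1 - n = (i : ℕ) - n + 1 by omega, pow_succ]; ring
  · rw [show (i : ℕ) - n = n - 1 by omega]; ring

theorem xMat_mul_Rmat_mul_xMat_rotIdx (i : Fin (2 * n)) (a : ℝ) :
    xMat n i a * Rmat n * xMat n (rotIdx n i) a = Rmat n := by
  rw [xMat_eq, xMat_eq]
  refine one_add_single_mul_mul_one_add_single _ (Rmat_eq_zero_of_ne_rotIdx ?_)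
    (fun q hq => Rmat_eq_zero_of_ne_rotIdx (rotIdx_cycSucc i ▸ hq))
    (fun p hp => Rmat_eq_zero_of_ne_rotIdx fun h =>
      hp (by rw [← rotIdx_rotIdx p, ← h, rotIdx_rotIdx]))
    (bridgeCoeff_mul_Rmat_add i a)
  rw [rotIdx_cycSucc]
  exact (cycSucc_ne_self _).symm

theorem xMat_mul_yMat_rotIdx_conj_Rmat (i : Fin (2 * n)) (a : ℝ) :
    xMat n i a * yMat n (rotIdx n i) a * Rmat n * (xMat n i a * yMat n (rotIdx n i) a)ᵀ =
      Rmat n := by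
  refine mul_mul_mul_transpose_eq_of_commute ?_ Rmat_transpose ?_
  · rw [yMat_eq_transpose, xMat_eq, xMat_eq, transpose_add, transpose_one, transpose_single]
    refine commute_one_add_single ?_ (rotIdx_ne_self i) _ _
    rw [← rotIdx_cycSucc]
    exact (rotIdx_ne_self _).symm
  · rw [yMat_eq_transpose, transpose_transpose]
    exact xMat_mul_Rmat_mul_xMat_rotIdx i a
end Lagrangian

/-- Adding a pair of symmetric bridges preserves the totally nonnegative
Lagrangian Grassmannian: if `X·R·Xᵀ = 0` and all maximal minors of `X` are
nonnegative, then the same holds for `Y = X·x_i(a)·y_{i+n}(a)` for any `a > 0`. -/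
theorem stmt10 (n : ℕ) (X : Matrix (Fin n) (Fin (2*n)) ℝ)
    (hlag : X * Rmat n * Xᵀ = 0)
    (htnn : ∀ I : Finset (Fin (2*n)), I.card = n → 0 ≤ Delta X I)
    (a : ℝ) (ha : 0 < a) (i : Fin (2*n)) :
    (X * xMat n i a * yMat n (rotIdx n i) a) * Rmat n *
        (X * xMat n i a * yMat n (rotIdx n i) a)ᵀ = 0 ∧
      ∀ I : Finset (Fin (2*n)), I.card = n →
        0 ≤ Delta (X * xMat n i a * yMat n (rotIdx n i) a) I := by
  refine ⟨?_, Delta_mul_yMat_nonneg (Delta_mul_xMat_nonneg htnn ha.le i) ha.le _⟩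
  calc X * xMat n i a * yMat n (rotIdx n i) a * Rmat n *
        (X * xMat n i a * yMat n (rotIdx n i) a)ᵀ
      = X * (xMat n i a * yMat n (rotIdx n i) a * Rmat n *
          (xMat n i a * yMat n (rotIdx n i) a)ᵀ) * Xᵀ := by
        simp only [transpose_mul, Matrix.mul_assoc]
    _ = 0 := by rw [xMat_mul_yMat_rotIdx_conj_Rmat, hlag]
end

section
/- Let f be a ρ-symmetric bounded affine permutation of type (n,2n) and set m = #{i ∈ {1,…,2n} : f(i) = i+n}. Then σℓ(f) ≥ n − m/2. In particular, if m ∈ {0,2} then σℓ(f) ≥ n−1. -/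
/-- The set of alignments `(i,j)` of `f` with `1 ≤ i ≤ 2n`: pairs with `i < j ≤ f j < f i`. -/
def alignSet (n : ℕ) (f : ℤ → ℤ) : Set (ℤ × ℤ) :=
  {p | 1 ≤ p.1 ∧ p.1 ≤ 2 * (n : ℤ) ∧ p.1 < p.2 ∧ p.2 ≤ f p.2 ∧ f p.2 < f p.1}

/-- The mirror map on alignments of a ρ-symmetric `f`: `(i,j)` is sent to the pair obtained
from `(f j + n, f i + n)` by adding to both coordinates the unique multiple of `2n`
placing the first coordinate in `{1, …, 2n}`. -/
def mirror (n : ℕ) (f : ℤ → ℤ) (p : ℤ × ℤ) : ℤ × ℤ :=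
  ((f p.2 + (n : ℤ) - 1) % (2 * (n : ℤ)) + 1,
   f p.1 + (n : ℤ) + (((f p.2 + (n : ℤ) - 1) % (2 * (n : ℤ)) + 1) - (f p.2 + (n : ℤ))))

/-- `σℓ(f)`: the number of orbits of the mirror involution on the alignments of `f`;
a pair of distinct mirrored alignments counts once and each self-mirror alignment
counts once, so it equals `(#alignments + #self-mirror alignments)/2`. -/
noncomputable def sigmaL (n : ℕ) (f : ℤ → ℤ) : ℕ :=
  ((alignSet n f).ncard + {p ∈ alignSet n f | mirror n f p = p}.ncard) / 2

/-!
Put `g i = f i - n`. Then ρ-symmetry says that `g` is an involution and periodicity that it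
commutes with translation by `2n`. For `i ∈ [1, 2n]` with `i < g i`, the pair `(i, g i)` is an
alignment fixed by the mirror map, so each such `i` is an orbit of its own. Reducing `g i` into
`[1, 2n]` exchanges the indices with `i < g i` and those with `g i < i`, and the fixed points of
`g` are the `m` indices with `f i = i + n`; so there are exactly `n - m/2` indices of the first
kind.
-/

section PeriodicInvolution

variable {g : ℤ → ℤ} {p : ℤ}

theorem apply_add_zsmul_of_apply_add (hg : ∀ i, g (i + p) = g i + p) (t i : ℤ) :
    g (i + t • p) = g i + t • p := by
  have hper : Function.Periodic (fun i => g i - i) p := fun i => by simp only [hg]; ring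
  linarith [hper.zsmul t i]

theorem apply_toIcoMod_apply (hp : 0 < p) (hinv : Function.Involutive g)
    (hg : ∀ i, g (i + p) = g i + p) (a i : ℤ) :
    g (toIcoMod hp a (g i)) = i - toIcoDiv hp a (g i) • p := by
  rw [← self_sub_toIcoDiv_zsmul, sub_eq_add_neg, ← neg_zsmul, apply_add_zsmul_of_apply_add hg,
    hinv, neg_zsmul, ← sub_eq_add_neg]

theorem toIcoMod_apply_toIcoMod_apply (hp : 0 < p) (hinv : Function.Involutive g)
    (hg : ∀ i, g (i + p) = g i + p) {a i : ℤ} (hi : i ∈ Set.Ico a (a + p)) :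
    toIcoMod hp a (g (toIcoMod hp a (g i))) = i := by
  rw [apply_toIcoMod_apply hp hinv hg, toIcoMod_sub_zsmul, toIcoMod_eq_self]
  exact hi

theorem card_filter_lt_apply_eq_card_filter_apply_lt (hp : 0 < p) (hinv : Function.Involutive g)
    (hg : ∀ i, g (i + p) = g i + p) (a : ℤ) :
    ((Finset.Ico a (a + p)).filter (fun i => i < g i)).card =
      ((Finset.Ico a (a + p)).filter (fun i => g i < i)).card := by
  set φ := fun i => toIcoMod hp a (g i)
  have hφ_mem (i : ℤ) : φ i ∈ Finset.Ico a (a + p) := by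
    simpa [Finset.mem_Ico] using toIcoMod_mem_Ico hp a (g i)
  have hφ_sub (i : ℤ) : g (φ i) - φ i = i - g i := by
    simp only [φ]
    rw [apply_toIcoMod_apply hp hinv hg, ← self_sub_toIcoDiv_zsmul]
    ring
  have hφφ : ∀ i ∈ Finset.Ico a (a + p), φ (φ i) = i := fun i hi =>
    toIcoMod_apply_toIcoMod_apply hp hinv hg (by simpa using hi)
  refine Finset.card_nbij' φ φ (fun i hi => ?_) (fun i hi => ?_)
    (fun i hi => hφφ i (Finset.mem_filter.mp hi).1)
    (fun i hi => hφφ i (Finset.mem_filter.mp hi).1)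
  all_goals
    rw [Finset.mem_coe, Finset.mem_filter] at hi ⊢
    exact ⟨hφ_mem i, by linarith [hφ_sub i]⟩

theorem two_mul_card_filter_lt_apply_add_card_filter_apply_eq {N : ℕ}
    (hinv : Function.Involutive g) (hg : ∀ i, g (i + N) = g i + N) (a : ℤ) :
    2 * ((Finset.Ico a (a + N)).filter (fun i => i < g i)).card +
      ((Finset.Ico a (a + N)).filter (fun i => g i = i)).card = N := by
  obtain rfl | hN := N.eq_zero_or_pos
  · simp
  have hlt_gt := card_filter_lt_apply_eq_card_filter_apply_lt (by omega : (0 : ℤ) < N) hinv hg a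
  set W := Finset.Ico a (a + N)
  have hsplit := Finset.card_filter_add_card_filter_not (s := W) (fun i => i < g i)
  have hsplit' := Finset.card_filter_add_card_filter_not
    (s := W.filter (fun i => ¬ i < g i)) (fun i => g i < i)
  rw [Finset.filter_filter, Finset.filter_filter] at hsplit'
  rw [Finset.filter_congr (fun i _ => show ¬ i < g i ∧ g i < i ↔ g i < i by omega),
    Finset.filter_congr (fun i _ => show ¬ i < g i ∧ ¬ g i < i ↔ g i = i by omega)] at hsplit'
  have hW : W.card = N := by simp [W]
  omega

end PeriodicInvolution

section Alignments

variable {n : ℕ} {f : ℤ → ℤ}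

theorem alignSet_finite (hbound : ∀ i, f i ≤ i + 2 * n) : (alignSet n f).Finite := by
  refine ((Set.finite_Icc (1 : ℤ) (2 * n)).prod (Set.finite_Icc (1 : ℤ) (4 * n))).subset ?_
  rintro ⟨i, j⟩ ⟨hi1, hi2, hij, hjfj, hfj⟩
  have := hbound i
  dsimp only at hjfj hfj
  exact ⟨⟨hi1, hi2⟩, by omega, by omega⟩

theorem ncard_le_sigmaL (hfin : (alignSet n f).Finite) {T : Set (ℤ × ℤ)}
    (hT : T ⊆ {p ∈ alignSet n f | mirror n f p = p}) : T.ncard ≤ sigmaL n f := by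
  have hself : T.ncard ≤ {p ∈ alignSet n f | mirror n f p = p}.ncard :=
    Set.ncard_le_ncard hT (hfin.subset fun _ hp => hp.1)
  have hall : T.ncard ≤ (alignSet n f).ncard :=
    Set.ncard_le_ncard (hT.trans fun _ hp => hp.1) hfin
  unfold sigmaL
  omega

theorem mk_sub_mem_alignSet (hsym : ∀ i, f (f i - n) = i + n) {i : ℤ} (hi1 : 1 ≤ i)
    (hi2 : i ≤ 2 * n) (hlt : i + n < f i) (hle : f i ≤ i + 2 * n) :
    (i, f i - n) ∈ alignSet n f := by
  refine ⟨hi1, hi2, ?_, ?_, ?_⟩ <;> simp only [hsym] <;> omega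

theorem mirror_mk_sub_eq_self (hsym : ∀ i, f (f i - n) = i + n) {i : ℤ} (hi1 : 1 ≤ i)
    (hi2 : i ≤ 2 * n) : mirror n f (i, f i - n) = (i, f i - n) := by
  have hwrap : (i + n + n - 1) % (2 * (n : ℤ)) + 1 = i := by
    rw [show i + n + n - 1 = (i - 1) + 2 * (n : ℤ) * 1 by ring, Int.add_mul_emod_self_left,
      Int.emod_eq_of_lt (by omega) (by omega)]
    ring
  simp only [mirror, hsym, hwrap]
  ext <;> simp only; ring

end Alignments

theorem stmt15_general (n : ℕ) (f : ℤ → ℤ)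
    (hper : ∀ i : ℤ, f (i + 2 * (n : ℤ)) = f i + 2 * (n : ℤ))
    (hbound : ∀ i : ℤ, i ≤ f i ∧ f i ≤ i + 2 * (n : ℤ))
    (hsym : ∀ i : ℤ, f (f i - (n : ℤ)) = i + (n : ℤ))
    (m : ℕ)
    (hm : m = ((Finset.Icc (1 : ℤ) (2 * (n : ℤ))).filter
      (fun i => f i = i + (n : ℤ))).card) :
    n - m / 2 ≤ sigmaL n f ∧ ((m = 0 ∨ m = 2) → n - 1 ≤ sigmaL n f) := by
  set g : ℤ → ℤ := fun i => f i - n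
  have hinv : Function.Involutive g := fun i => by simp only [g, hsym]; ring
  have hg : ∀ i, g (i + ((2 * n : ℕ) : ℤ)) = g i + ((2 * n : ℕ) : ℤ) := fun i => by
    simp only [g, Nat.cast_mul, Nat.cast_ofNat, hper]; ring
  have hwindow :
      Finset.Ico (1 : ℤ) (1 + ((2 * n : ℕ) : ℤ)) = Finset.Icc 1 (2 * (n : ℤ)) := by
    ext; simp only [Finset.mem_Ico, Finset.mem_Icc]; omega
  have hcount := two_mul_card_filter_lt_apply_add_card_filter_apply_eq hinv hg 1
  rw [hwindow, Finset.filter_congr fun _ _ => sub_eq_iff_eq_add, ← hm] at hcount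
  set S := (Finset.Icc (1 : ℤ) (2 * n)).filter (fun i => i < g i)
  have hself : (fun i => (i, g i)) '' S ⊆ {p ∈ alignSet n f | mirror n f p = p} := by
    rintro _ ⟨i, hi, rfl⟩
    obtain ⟨hi, hlt⟩ := Finset.mem_filter.mp (Finset.mem_coe.mp hi)
    obtain ⟨hi1, hi2⟩ := Finset.mem_Icc.mp hi
    have hlt' : i + n < f i := by simpa only [g, lt_sub_iff_add_lt] using hlt
    exact ⟨mk_sub_mem_alignSet hsym hi1 hi2 hlt' (hbound i).2,
      mirror_mk_sub_eq_self hsym hi1 hi2⟩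
  have hS := ncard_le_sigmaL (alignSet_finite fun i => (hbound i).2) hself
  rw [Set.ncard_image_of_injective _ fun i j hij => congrArg Prod.fst hij,
    Set.ncard_coe_finset] at hS
  omega

/-- For a ρ-symmetric bounded affine permutation `f` of type `(n,2n)` with
`m = #{i ∈ [1,2n] : f i = i+n}`, one has `σℓ(f) ≥ n − m/2`; in particular,
if `m ∈ {0,2}` then `σℓ(f) ≥ n−1`. -/
theorem stmt15 (n : ℕ) (f : ℤ → ℤ)
    (hbij : Function.Bijective f)
    (hper : ∀ i : ℤ, f (i + 2 * (n : ℤ)) = f i + 2 * (n : ℤ))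
    (hbound : ∀ i : ℤ, i ≤ f i ∧ f i ≤ i + 2 * (n : ℤ))
    (hsum : ∑ i ∈ Finset.Icc (1 : ℤ) (2 * (n : ℤ)), (f i - i) = 2 * (n : ℤ) ^ 2)
    (hsym : ∀ i : ℤ, f (f i - (n : ℤ)) = i + (n : ℤ))
    (m : ℕ)
    (hm : m = ((Finset.Icc (1 : ℤ) (2 * (n : ℤ))).filter
      (fun i => f i = i + (n : ℤ))).card) :
    n - m / 2 ≤ sigmaL n f ∧ ((m = 0 ∨ m = 2) → n - 1 ≤ sigmaL n f) :=
  stmt15_general n f hper hbound hsym m hm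
end
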